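/- Let x_1, ..., x_N be real numbers and suppose c_n, C_n are complex numbers with |c_n| ≤ C_n for all n (so in particular each C_n is a nonnegative real). Then ∫_{-T}^{T} |∑_{n=1}^{N} c_n e^{2πi x_n t}|² dt ≤ 3 ∫_{-T}^{T} |∑_{n=1}^{N} C_n e^{2πi x_n t}|² dt. -/

import Mathlib

open Real MeasureTheory Complex intervalIntegral

open scoped ComplexConjugate

/-!
Write `T = 2L` and `Q_g(s) = ∫ g (s + w) (2L - |w|)₊ dw`. The tent `(2L - |w|)₊` is the
self-convolution of the indicator of `[-L, L]`, so its Fourier transform is `K(ξ)²` with `K` real.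
Hence for `g = |∑ cₙ e(xₙ t)|²` one gets `Q_g(s) = ∑ c_m c̄_n K(x_m - x_n)² e((x_m - x_n) s)`,
which is at most `Q_G(0)` for `G = |∑ Cₙ e(xₙ t)|²`. Finally
`2L ∫_{-2L}^{2L} g ≤ Q_g(-2L) + Q_g(0) + Q_g(2L) ≤ 3 Q_G(0) ≤ 3 · 2L ∫_{-2L}^{2L} G`.
-/

namespace MajorantPrinciple

variable {ι : Type*} [Fintype ι]

noncomputable def expSum (a : ι → ℂ) (ξ : ι → ℝ) (t : ℝ) : ℂ :=
  ∑ i, a i * cexp (2 * π * I * ξ i * t)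

noncomputable def expKernel (L ξ : ℝ) : ℂ := ∫ u in (-L)..L, cexp (2 * π * I * ξ * u)

lemma cexp_two_pi_I_mul_add (ξ s u : ℝ) :
    cexp (2 * π * I * ξ * ↑(s + u)) = cexp (2 * π * I * ξ * s) * cexp (2 * π * I * ξ * u) := by
  rw [← Complex.exp_add]; push_cast; ring_nf

lemma conj_cexp_two_pi_I_mul (ξ t : ℝ) :
    conj (cexp (2 * π * I * ξ * t)) = cexp (2 * π * I * ξ * ↑(-t)) := by
  rw [← Complex.exp_conj]; simp [map_ofNat]

lemma cexp_two_pi_I_mul_mul_conj (ξ η t : ℝ) :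
    cexp (2 * π * I * ξ * t) * conj (cexp (2 * π * I * η * t))
      = cexp (2 * π * I * ↑(ξ - η) * t) := by
  rw [← Complex.exp_conj, ← Complex.exp_add]
  simp only [map_mul, map_ofNat, conj_ofReal, conj_I, ofReal_sub]
  ring_nf

lemma norm_cexp_two_pi_I_mul (ξ t : ℝ) : ‖cexp (2 * π * I * ξ * t)‖ = 1 := by
  rw [show 2 * π * I * ξ * t = ↑(2 * π * ξ * t) * I by push_cast; ring, norm_exp_ofReal_mul_I]

lemma continuous_expSum (a : ι → ℂ) (ξ : ι → ℝ) : Continuous (expSum a ξ) := by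
  unfold expSum; fun_prop

lemma expSum_zero (a : ι → ℂ) (ξ : ι → ℝ) : expSum a ξ 0 = ∑ i, a i := by
  simp [expSum]

lemma norm_expSum_le (a : ι → ℂ) (ξ : ι → ℝ) (t : ℝ) : ‖expSum a ξ t‖ ≤ ∑ i, ‖a i‖ :=
  (norm_sum_le _ _).trans_eq <| by simp [norm_cexp_two_pi_I_mul]

lemma sq_norm_expSum (a : ι → ℂ) (ξ : ι → ℝ) (t : ℝ) :
    ((‖expSum a ξ t‖ ^ 2 : ℝ) : ℂ)
      = expSum (fun p : ι × ι => a p.1 * conj (a p.2)) (fun p => ξ p.1 - ξ p.2) t := by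
  rw [ofReal_pow, ← mul_conj', expSum, map_sum, Finset.sum_mul_sum, expSum, Fintype.sum_prod_type]
  refine Finset.sum_congr rfl fun i _ => Finset.sum_congr rfl fun j _ => ?_
  rw [map_mul, ← cexp_two_pi_I_mul_mul_conj]; ring

lemma integral_expSum_add (a : ι → ℂ) (ξ : ι → ℝ) (L s : ℝ) :
    ∫ u in (-L)..L, expSum a ξ (s + u) = expSum (fun i => a i * expKernel L (ξ i)) ξ s := by
  simp_rw [expSum, cexp_two_pi_I_mul_add, ← mul_assoc]
  rw [integral_finsetSum fun i _ => (by fun_prop : Continuous _).intervalIntegrable _ _]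
  refine Finset.sum_congr rfl fun i _ => ?_
  rw [intervalIntegral.integral_const_mul, expKernel]; ring

lemma conj_expKernel (L ξ : ℝ) : conj (expKernel L ξ) = expKernel L ξ := by
  rw [expKernel, ← intervalIntegral_conj]
  simp_rw [conj_cexp_two_pi_I_mul]
  rw [integral_comp_neg (fun u : ℝ => cexp (2 * π * I * ξ * u)), neg_neg]

lemma expKernel_sq (L ξ : ℝ) : expKernel L ξ ^ 2 = ((‖expKernel L ξ‖ ^ 2 : ℝ) : ℂ) := by
  rw [← (conj_eq_iff_re.mp (conj_expKernel L ξ)), norm_real, Real.norm_eq_abs, sq_abs]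
  push_cast; rfl

/-- `Q_g(s) = ∫ g (s + w) (2L - |w|)₊ dw`, written as an iterated integral. -/
noncomputable def tentIntegral {E : Type*} [NormedAddCommGroup E] [NormedSpace ℝ E]
    (g : ℝ → E) (L s : ℝ) : E :=
  ∫ v in (-L)..L, ∫ u in (-L)..L, g (s + v + u)

lemma ofReal_tentIntegral (g : ℝ → ℝ) (L s : ℝ) :
    ((tentIntegral g L s : ℝ) : ℂ) = tentIntegral (fun t => (g t : ℂ)) L s := by
  simp only [tentIntegral, integral_ofReal]

lemma tentIntegral_expSum (a : ι → ℂ) (ξ : ι → ℝ) (L s : ℝ) :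
    tentIntegral (expSum a ξ) L s = expSum (fun i => a i * expKernel L (ξ i) ^ 2) ξ s := by
  simp_rw [tentIntegral, integral_expSum_add, mul_assoc, ← sq]

lemma ofReal_tentIntegral_sq_norm_expSum (a : ι → ℂ) (ξ : ι → ℝ) (L s : ℝ) :
    ((tentIntegral (fun t => ‖expSum a ξ t‖ ^ 2) L s : ℝ) : ℂ)
      = expSum (fun p : ι × ι => a p.1 * conj (a p.2) * expKernel L (ξ p.1 - ξ p.2) ^ 2)
          (fun p => ξ p.1 - ξ p.2) s := by
  simp_rw [ofReal_tentIntegral, sq_norm_expSum, ← tentIntegral_expSum]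

lemma tentIntegral_sq_norm_expSum_le {c : ι → ℂ} {C : ι → ℝ} (h : ∀ i, ‖c i‖ ≤ C i)
    (ξ : ι → ℝ) (L s : ℝ) :
    tentIntegral (fun t => ‖expSum c ξ t‖ ^ 2) L s
      ≤ tentIntegral (fun t => ‖expSum (fun i => (C i : ℂ)) ξ t‖ ^ 2) L 0 := by
  calc tentIntegral (fun t => ‖expSum c ξ t‖ ^ 2) L s
      ≤ ‖((tentIntegral (fun t => ‖expSum c ξ t‖ ^ 2) L s : ℝ) : ℂ)‖ := by
        rw [norm_real, Real.norm_eq_abs]; exact le_abs_self _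
    _ ≤ ∑ p : ι × ι, ‖c p.1 * conj (c p.2) * expKernel L (ξ p.1 - ξ p.2) ^ 2‖ := by
        rw [ofReal_tentIntegral_sq_norm_expSum]; exact norm_expSum_le _ _ _
    _ ≤ ∑ p : ι × ι, C p.1 * C p.2 * ‖expKernel L (ξ p.1 - ξ p.2)‖ ^ 2 := by
        refine Finset.sum_le_sum fun p _ => ?_
        rw [norm_mul, norm_mul, norm_conj, norm_pow]
        have hC₁ : 0 ≤ C p.1 := (norm_nonneg _).trans (h p.1)
        gcongr <;> exact h _
    _ = tentIntegral (fun t => ‖expSum (fun i => (C i : ℂ)) ξ t‖ ^ 2) L 0 := by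
        apply ofReal_injective
        rw [ofReal_tentIntegral_sq_norm_expSum, expSum_zero]
        simp_rw [expKernel_sq, conj_ofReal]
        push_cast; rfl

section Tent

variable {f : ℝ → ℝ}

lemma integral_comp_add_centered (s L : ℝ) :
    ∫ u in (-L)..L, f (s + u) = ∫ t in (s - L)..(s + L), f t := by
  rw [integral_comp_add_left, sub_eq_add_neg]

lemma continuous_integral_comp_add (hf : Continuous f) (L s : ℝ) :
    Continuous fun v => ∫ u in (-L)..L, f (s + v + u) :=
  continuous_parametric_intervalIntegral_of_continuous' (by fun_prop) _ _

lemma tentIntegral_le (hf : Continuous f) (hf0 : ∀ t, 0 ≤ f t) {L : ℝ} (hL : 0 ≤ L) :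
    tentIntegral f L 0 ≤ 2 * L * ∫ t in (-(2 * L))..(2 * L), f t := by
  have hinner : ∀ v ∈ Set.Icc (-L) L,
      ∫ u in (-L)..L, f (0 + v + u) ≤ ∫ t in (-(2 * L))..(2 * L), f t := by
    rintro v ⟨hv₁, hv₂⟩
    rw [integral_comp_add_centered]
    exact integral_mono_interval (by linarith) (by linarith) (by linarith)
      (.of_forall hf0) (hf.intervalIntegrable _ _)
  calc tentIntegral f L 0 ≤ ∫ _ in (-L)..L, ∫ t in (-(2 * L))..(2 * L), f t :=
        integral_mono_on (by linarith)
          ((continuous_integral_comp_add hf L 0).intervalIntegrable _ _) intervalIntegrable_const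
          hinner
    _ = 2 * L * ∫ t in (-(2 * L))..(2 * L), f t := by
        rw [intervalIntegral.integral_const, smul_eq_mul]; ring

/-- Three translates of the tent cover `[-2L, 2L]` with total height at least `2L`. -/
lemma integral_le_tentIntegral_add (hf : Continuous f) (hf0 : ∀ t, 0 ≤ f t) {L : ℝ}
    (hL : 0 ≤ L) :
    2 * L * ∫ t in (-(2 * L))..(2 * L), f t
      ≤ tentIntegral f L (-(2 * L)) + tentIntegral f L 0 + tentIntegral f L (2 * L) := by
  have hfi : ∀ a b, IntervalIntegrable f volume a b := hf.intervalIntegrable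
  have hint : ∀ s, IntervalIntegrable (fun v => ∫ u in (-L)..L, f (s + v + u)) volume (-L) L :=
    fun s => (continuous_integral_comp_add hf L s).intervalIntegrable _ _
  have hinner : ∀ v ∈ Set.Icc (-L) L, ∫ t in (-(2 * L))..(2 * L), f t
      ≤ (∫ u in (-L)..L, f (-(2 * L) + v + u)) + (∫ u in (-L)..L, f (0 + v + u))
          + ∫ u in (-L)..L, f (2 * L + v + u) := by
    rintro v ⟨hv₁, hv₂⟩
    simp only [integral_comp_add_centered]
    rw [show -(2 * L) + v + L = 0 + v - L by ring, show 0 + v + L = 2 * L + v - L by ring,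
      integral_add_adjacent_intervals (hfi _ _) (hfi _ _),
      integral_add_adjacent_intervals (hfi _ _) (hfi _ _)]
    exact integral_mono_interval (by linarith) (by linarith) (by linarith)
      (.of_forall hf0) (hfi _ _)
  calc 2 * L * ∫ t in (-(2 * L))..(2 * L), f t
      = ∫ _ in (-L)..L, ∫ t in (-(2 * L))..(2 * L), f t := by
        rw [intervalIntegral.integral_const, smul_eq_mul]; ring
    _ ≤ _ := integral_mono_on (by linarith) intervalIntegrable_const
        (((hint _).add (hint _)).add (hint _)) hinner
    _ = _ := by
        rw [integral_add ((hint _).add (hint _)) (hint _), integral_add (hint _) (hint _)]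
        rfl

end Tent

end MajorantPrinciple

open MajorantPrinciple

theorem majorant_principle (N : ℕ) (T : ℝ) (hT : 0 < T)
    (x : Fin N → ℝ) (c : Fin N → ℂ) (C : Fin N → ℝ)
    (h : ∀ n, ‖c n‖ ≤ C n) :
    ∫ t in (-T)..T, ‖∑ n, c n * Complex.exp (2 * π * Complex.I * (x n) * t)‖ ^ 2 ≤
      3 * ∫ t in (-T)..T,
        ‖∑ n, (C n : ℂ) * Complex.exp (2 * π * Complex.I * (x n) * t)‖ ^ 2 := by
  obtain ⟨L, rfl⟩ : ∃ L, T = 2 * L := ⟨T / 2, by ring⟩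
  set f := fun t => ‖expSum c x t‖ ^ 2
  set F := fun t => ‖expSum (fun n => (C n : ℂ)) x t‖ ^ 2
  have hL : 0 < L := by linarith
  have hf : Continuous f := (continuous_expSum _ _).norm.pow 2
  have hF : Continuous F := (continuous_expSum _ _).norm.pow 2
  have hQ := tentIntegral_sq_norm_expSum_le h x L
  refine le_of_mul_le_mul_left ?_ (by positivity : 0 < 2 * L)
  calc 2 * L * ∫ t in (-(2 * L))..(2 * L), f t
      ≤ tentIntegral f L (-(2 * L)) + tentIntegral f L 0 + tentIntegral f L (2 * L) :=
        integral_le_tentIntegral_add hf (fun _ => by positivity) hL.le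
    _ ≤ 3 * tentIntegral F L 0 := by linarith [hQ (-(2 * L)), hQ 0, hQ (2 * L)]
    _ ≤ 3 * (2 * L * ∫ t in (-(2 * L))..(2 * L), F t) := by
        gcongr; exact tentIntegral_le hF (fun _ => by positivity) hL.le
    _ = 2 * L * (3 * ∫ t in (-(2 * L))..(2 * L), F t) := by ring
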